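/- In each of the following four cases (components of w in the order (a₁₂, a₁₃, a₂₃, b₁, b₂, b₃)): (i) (k₁,k₂,k₃) = (2,2,k₃) with k₃ ∉ {1,3} and w = (x⁻¹, 0, 0, 0, 0, (k₃/2)·x⁻²); (ii) (k₁,k₂,k₃) = (k,k,3−k) with k ≠ 2 and w = (0, 0, 0, −x⁻¹, x⁻², 0); (iii) (k₁,k₂,k₃) = (k,k,5−k) with k ≠ 2 and w = (0, x⁻², x⁻¹, (k/3)·x⁻², −(2k/3)·x⁻³, 0); (iv) (k₁,k₂,k₃) = (1,1,0) and w = (0, 0, 0, 0, 0, x⁻¹); one has: E′(w) ∈ B, F′(w) ∈ B, w ∉ B, and every z ∈ V with E′(z) ∈ B and F′(z) ∈ B satisfies z ∈ ℂ·w + B. In other words, in each case the 𝔰′-invariant part of H¹(ℂℙ¹, T₂) is one-dimensional, spanned by the class of w. -/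

import Mathlib

noncomputable section

open LaurentPolynomial

/-- `L = ℂ[x, x⁻¹]`, the Laurent polynomials over `ℂ`. -/
abbrev L : Type := LaurentPolynomial ℂ

/-- The coefficient of `x^n` in a Laurent polynomial. -/
def coeffL (p : L) (n : ℤ) : ℂ := (AddMonoidAlgebra.coeff p : ℤ →₀ ℂ) n

lemma coeffL_zero (n : ℤ) : coeffL 0 n = 0 := rfl

lemma coeffL_add (a b : L) (n : ℤ) : coeffL (a + b) n = coeffL a n + coeffL b n := by
  unfold coeffL; erw [Finsupp.add_apply]; rfl

lemma coeffL_smul (c : ℂ) (a : L) (n : ℤ) : coeffL (c • a) n = c * coeffL a n := by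
  unfold coeffL; erw [Finsupp.smul_apply]; rfl

/-- `L₊`: Laurent polynomials involving only nonnegative powers of `x`. -/
def Lplus : Submodule ℂ L where
  carrier := {p | ∀ n : ℤ, n < 0 → coeffL p n = 0}
  zero_mem' := fun n _ => coeffL_zero n
  add_mem' := by intro a b ha hb n hn; rw [coeffL_add, ha n hn, hb n hn, add_zero]
  smul_mem' := by intro c p hp n hn; rw [coeffL_smul, hp n hn, mul_zero]

/-- `L₋`: Laurent polynomials involving only nonpositive powers of `x`. -/
def Lminus : Submodule ℂ L where
  carrier := {p | ∀ n : ℤ, 0 < n → coeffL p n = 0}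
  zero_mem' := fun n _ => coeffL_zero n
  add_mem' := by intro a b ha hb n hn; rw [coeffL_add, ha n hn, hb n hn, add_zero]
  smul_mem' := by intro c p hp n hn; rw [coeffL_smul, hp n hn, mul_zero]

/-- The derivative `d/dx` on Laurent polynomials. -/
def D (p : L) : L := Finsupp.sum (AddMonoidAlgebra.coeff p : ℤ →₀ ℂ) fun n a => ((n : ℂ) * a) • T (n - 1)

/-- `V = L⁶`, the model of Čech 1-cochains with values in `T₂`: a tuple
`v = (a₁₂, a₁₃, a₂₃, b₁, b₂, b₃)` (components `v 0, …, v 5`) encodes the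
vector field `Σ_{i<j} a_{ij}(x)ξᵢξⱼ∂/∂x + Σ_t b_t(x)ξ₁ξ₂ξ₃∂/∂ξ_t` on `U₀ ∩ U₁`. -/
abbrev V : Type := Fin 6 → L

/-- `B₀ = (L₊)⁶`: cochains holomorphic in `U₀`. -/
def B0 : Submodule ℂ V := Submodule.pi Set.univ fun _ => Lplus

/-- The linear map `v ↦ x^m · (v i)`. -/
def cndA (m : ℤ) (i : Fin 6) : V →ₗ[ℂ] L :=
  (LinearMap.mulLeft ℂ (T m)).comp (LinearMap.proj i)

/-- The linear map `v ↦ x^m · (v i − c·x⁻¹·(v j))`. -/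
def cndB (m : ℤ) (c : ℂ) (i j : Fin 6) : V →ₗ[ℂ] L :=
  (LinearMap.mulLeft ℂ (T m)).comp
    (LinearMap.proj i - c • (LinearMap.mulLeft ℂ (T (-1))).comp (LinearMap.proj j))

/-- `B₁`: cochains holomorphic in `U₁`, i.e. `v` with
`x^(kᵢ+kⱼ−2)·a_{ij} ∈ L₋` for all `i < j` and
`x^(d−k_t)·(b_t − σ_t·k_t·x⁻¹·a_{(t)}) ∈ L₋` for `t = 1, 2, 3`
(σ₁ = 1, σ₂ = −1, σ₃ = 1, a₍₁₎ = a₂₃, a₍₂₎ = a₁₃, a₍₃₎ = a₁₂, d = k₁+k₂+k₃). -/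
def B1 (k1 k2 k3 : ℤ) : Submodule ℂ V :=
  Lminus.comap (cndA (k1 + k2 - 2) 0) ⊓
  Lminus.comap (cndA (k1 + k3 - 2) 1) ⊓
  Lminus.comap (cndA (k2 + k3 - 2) 2) ⊓
  Lminus.comap (cndB (k2 + k3) ((k1 : ℂ)) 3 2) ⊓
  Lminus.comap (cndB (k1 + k3) (-(k2 : ℂ)) 4 1) ⊓
  Lminus.comap (cndB (k1 + k2) ((k3 : ℂ)) 5 0)

/-- The coboundary subspace `B = B₀ + B₁`. -/
def B (k1 k2 k3 : ℤ) : Submodule ℂ V := B0 ⊔ B1 k1 k2 k3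

/-- Action of `e = ∂/∂x` on cocycles: the componentwise derivative. -/
def Eop : V → V := fun v i => D (v i)

/-- Action of `f = ∂/∂y` on cocycles, with components
`a_{ij} ↦ (2 − kᵢ − kⱼ)·x·a_{ij} − x²·a_{ij}′` and
`b_t ↦ σ_t·k_t·a₍ₜ₎ − (d − k_t)·x·b_t − x²·b_t′`. -/
def Fop (k1 k2 k3 : ℤ) : V → V := fun v =>
  ![((2 - k1 - k2 : ℤ) : ℂ) • (T 1 * v 0) - T 2 * D (v 0),
    ((2 - k1 - k3 : ℤ) : ℂ) • (T 1 * v 1) - T 2 * D (v 1),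
    ((2 - k2 - k3 : ℤ) : ℂ) • (T 1 * v 2) - T 2 * D (v 2),
    (k1 : ℂ) • v 2 - ((k2 + k3 : ℤ) : ℂ) • (T 1 * v 3) - T 2 * D (v 3),
    -((k2 : ℂ) • v 1) - ((k1 + k3 : ℤ) : ℂ) • (T 1 * v 4) - T 2 * D (v 4),
    (k3 : ℂ) • v 0 - ((k1 + k2 : ℤ) : ℂ) • (T 1 * v 5) - T 2 * D (v 5)]

/-- `N(v) = (0, 0, a₁₃, −b₂, 0, 0)`; `e′ = ∂/∂x + ξ₂∂/∂ξ₁` acts by `E′ = E + N`. -/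
def Nop : V → V := fun v => ![0, 0, v 1, -v 4, 0, 0]

/-- `M(v) = (0, a₂₃, 0, 0, −b₁, 0)`; `f′ = ∂/∂y + η₁∂/∂η₂` acts by `F′ = F + M`. -/
def Mop : V → V := fun v => ![0, v 2, 0, 0, -v 3, 0]

/-- The action `E′ = E + N` of `e′ = ∂/∂x + ξ₂∂/∂ξ₁`. -/
def E'op : V → V := fun v => Eop v + Nop v

/-- The action `F′ = F + M` of `f′ = ∂/∂y + η₁∂/∂η₂`. -/
def F'op (k1 k2 k3 : ℤ) : V → V := fun v => Fop k1 k2 k3 v + Mop v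

/-- `N″(v) = (0, a₁₂, a₁₃, −b₂, −b₃, 0)`;
`e″ = ∂/∂x + ξ₂∂/∂ξ₁ + ξ₃∂/∂ξ₂` acts by `E″ = E + N″`. -/
def N''op : V → V := fun v => ![0, v 0, v 1, -v 4, -v 5, 0]

/-- `M″(v) = (2a₁₃, 2a₂₃, 0, 0, −2b₁, −2b₂)`;
`f″ = ∂/∂y + 2η₁∂/∂η₂ + 2η₂∂/∂η₃` acts by `F″ = F + M″`. -/
def M''op : V → V := fun v => ![(2 : ℂ) • v 1, (2 : ℂ) • v 2, 0, 0, -((2 : ℂ) • v 3), -((2 : ℂ) • v 4)]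

/-- The action `E″ = E + N″` of `e″`. -/
def E''op : V → V := fun v => Eop v + N''op v

/-- The action `F″ = F + M″` of `f″`. -/
def F''op (k1 k2 k3 : ℤ) : V → V := fun v => Fop k1 k2 k3 v + M''op v

/-- "The 𝔰′-invariant part of `H¹(ℂℙ¹, T₂)` (for degrees `(k₁, k₂, k₃)`) is
one-dimensional, spanned by the class of `w`." -/
def OneDimInv (k1 k2 k3 : ℤ) (w : V) : Prop :=
  E'op w ∈ B k1 k2 k3 ∧ F'op k1 k2 k3 w ∈ B k1 k2 k3 ∧ w ∉ B k1 k2 k3 ∧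
  ∀ z : V, E'op z ∈ B k1 k2 k3 → F'op k1 k2 k3 z ∈ B k1 k2 k3 →
    ∃ c : ℂ, z - c • w ∈ B k1 k2 k3


/-! With `k₁ = k₂ = k`, a cochain splits into three pairs `(a₍ₜ₎, b_t)` of weight
`m = d - k_t`: `(a₁₂, b₃)` with `m = 2k`, on which `e′` and `f′` act as `e` and `f`, and
`(a₁₃, b₂)`, `(a₂₃, b₁)` with `m = k + k₃`, which `ξ₂∂/∂ξ₁` and `η₁∂/∂η₂` couple. `B` splits
accordingly, and a pair lies in `B` iff finitely many of its negative coefficients satisfy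
explicit linear relations. Comparing coefficients in `E′z, F′z ∈ B` forces these relations,
except for one free coefficient in four exceptional weights: `m = 4` or `(m, k₃) = (2, 0)` for
the single pair, `m = 3` or `m = 5` for the coupled block. In each of the four cases exactly one
block has an exceptional weight. -/

attribute [simp] coeffL_zero coeffL_add coeffL_smul

@[simp] lemma coeffL_neg (a : L) (n : ℤ) : coeffL (-a) n = -coeffL a n := by
  unfold coeffL; erw [Finsupp.neg_apply]; rfl

@[simp] lemma coeffL_sub (a b : L) (n : ℤ) : coeffL (a - b) n = coeffL a n - coeffL b n := by
  unfold coeffL; erw [Finsupp.sub_apply]; rfl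

@[simp] lemma coeffL_T (m n : ℤ) : coeffL (T m) n = if n = m then 1 else 0 := by
  unfold coeffL
  exact Finsupp.single_apply.trans (by simp [eq_comm])

@[simp] lemma coeffL_T_mul (m : ℤ) (p : L) (n : ℤ) : coeffL (T m * p) n = coeffL p (n - m) := by
  unfold coeffL
  erw [AddMonoidAlgebra.coeff_single_mul_apply]
  rw [one_mul, sub_eq_neg_add]

@[simp] lemma coeffL_D (p : L) (n : ℤ) :
    coeffL (D p) n = ((n + 1 : ℤ) : ℂ) * coeffL p (n + 1) := by
  unfold D coeffL
  rw [AddMonoidAlgebra.coeff_finsuppSum, Finsupp.sum_apply]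
  have hterm (m : ℤ) (a : ℂ) : (AddMonoidAlgebra.coeff (((m : ℂ) * a) • T (m - 1) : L)) n
      = if m = n + 1 then (m : ℂ) * a else 0 := by
    change (m : ℂ) * a * coeffL (T (m - 1)) n = _
    by_cases h : m = n + 1
    · simp [h]
    · simp [h]; omega
  rw [Finsupp.sum_congr (g2 := fun m a => if m = n + 1 then (m : ℂ) * a else 0)
    fun m _ => hterm m _, Finsupp.sum_ite_eq']
  split_ifs with h
  · push_cast; rfl
  · rw [Finsupp.notMem_support_iff.mp h, mul_zero]

lemma eq_zero_of_intCast_mul_eq_zero {r : ℤ} {x : ℂ} (hr : r ≠ 0) (h : (r : ℂ) * x = 0) :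
    x = 0 :=
  (mul_eq_zero_iff_left (Int.cast_ne_zero.mpr hr)).mp h

lemma mem_Lplus_iff {p : L} : p ∈ Lplus ↔ ∀ n : ℤ, n < 0 → coeffL p n = 0 := Iff.rfl

lemma T_mul_mem_Lminus_iff (m : ℤ) (p : L) :
    T m * p ∈ Lminus ↔ ∀ n : ℤ, 1 - m ≤ n → coeffL p n = 0 := by
  change (∀ n : ℤ, 0 < n → coeffL (T m * p) n = 0) ↔ _
  simp only [coeffL_T_mul]
  exact ⟨fun h n hn => by simpa using h (n + m) (by omega), fun h n hn => h (n - m) (by omega)⟩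

def truncNeg (p : L) : L :=
  AddMonoidAlgebra.ofCoeff ((AddMonoidAlgebra.coeff p).filter (· < 0))

lemma coeffL_truncNeg (p : L) (n : ℤ) :
    coeffL (truncNeg p) n = if n < 0 then coeffL p n else 0 :=
  Finsupp.filter_apply _ _ _

/-- `(a, b) = (a₍ₜ₎, b_t)` lies in the corresponding component of `B`, written out on
coefficients (see `isPairCoboundary_iff`); here `m = d - k_t` and `c = σ_t k_t`. -/
def IsPairCoboundary (m : ℤ) (c : ℂ) (a b : L) : Prop :=
  (∀ n : ℤ, 3 - m ≤ n → n < 0 → coeffL a n = 0) ∧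
  (∀ n : ℤ, 1 - m ≤ n → n < -1 → coeffL b n = c * coeffL a (n + 1)) ∧
  (3 ≤ m ∨ (m = 2 ∧ c = 0) → coeffL b (-1) = 0)

lemma coeffL_sub_smul_T_neg_one_mul (c : ℂ) (a b : L) (n : ℤ) :
    coeffL (b - c • (T (-1) * a)) n = coeffL b n - c * coeffL a (n + 1) := by
  rw [coeffL_sub, coeffL_smul, coeffL_T_mul, sub_neg_eq_add]

lemma isPairCoboundary_iff (m : ℤ) (c : ℂ) (a b : L) :
    IsPairCoboundary m c a b ↔ ∃ a' b' : L, a - a' ∈ Lplus ∧ b - b' ∈ Lplus ∧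
      T (m - 2) * a' ∈ Lminus ∧ T m * (b' - c • (T (-1) * a')) ∈ Lminus := by
  simp only [mem_Lplus_iff, T_mul_mem_Lminus_iff, coeffL_sub_smul_T_neg_one_mul]
  simp only [coeffL_sub, sub_eq_zero]
  constructor
  · rintro ⟨ha, hb, hb₁⟩
    -- the constant term of `a'` absorbs `b_{-1}` when `m = 2` and `c ≠ 0`
    refine ⟨truncNeg a + (coeffL b (-1) / c) • T 0, truncNeg b, ?_, ?_, ?_, ?_⟩ <;>
      simp only [coeffL_add, coeffL_smul, coeffL_truncNeg, coeffL_T]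
    · intro n hn; simp [hn, hn.ne]
    · intro n hn; simp [hn]
    · intro n hn
      rcases lt_trichotomy n 0 with h | rfl | h
      · simp [h, h.ne, ha n (by omega) h]
      · simp [hb₁ (Or.inl (by omega))]
      · simp [h.ne', h.not_gt]
    · intro n hn
      rcases lt_trichotomy n (-1) with h | rfl | h
      · simp [show n < 0 by omega, show n + 1 < 0 by omega, show n + 1 ≠ 0 by omega,
          hb n (by omega) h]
      · rcases eq_or_ne c 0 with rfl | hc
        · simp [hb₁ ((le_or_gt 3 m).imp id fun _ => ⟨by omega, rfl⟩)]
        · field_simp; simp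
      · simp [show ¬ n < 0 by omega, show ¬ n + 1 < 0 by omega, show n + 1 ≠ 0 by omega]
  · rintro ⟨a', b', ha, hb, ha', hb'⟩
    refine ⟨fun n hn hn' => (ha n hn').trans (ha' n (by omega)), fun n hn hn' => ?_,
      fun hm => ?_⟩
    · rw [hb n (by omega), hb' n (by omega), ha (n + 1) (by omega)]
    · rw [hb (-1) (by omega), hb' (-1) (by omega), neg_add_cancel]
      rcases hm with hm | ⟨-, rfl⟩
      · rw [ha' 0 (by omega), mul_zero]
      · rw [zero_mul]

lemma isPairCoboundary_zero (m : ℤ) (c : ℂ) : IsPairCoboundary m c 0 0 := by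
  simp [IsPairCoboundary]

lemma isPairCoboundary_of_le_one {m : ℤ} (hm : m ≤ 1) (c : ℂ) (a b : L) :
    IsPairCoboundary m c a b :=
  ⟨fun _ _ _ => by omega, fun _ _ _ => by omega, fun h => by rcases h with h | ⟨h, -⟩ <;> omega⟩

lemma isPairCoboundary_two_iff (c : ℂ) (a b : L) :
    IsPairCoboundary 2 c a b ↔ (c = 0 → coeffL b (-1) = 0) :=
  ⟨fun h hc => h.2.2 (Or.inr ⟨rfl, hc⟩), fun h => ⟨fun _ _ _ => by omega,
    fun _ _ _ => by omega, fun h' => h (by rcases h' with h' | ⟨-, hc⟩ <;> [omega; exact hc])⟩⟩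

lemma mem_B1_iff (k1 k2 k3 : ℤ) (v : V) : v ∈ B1 k1 k2 k3 ↔
    (T (k1 + k2 - 2) * v 0 ∈ Lminus ∧
      T (k1 + k2) * (v 5 - (k3 : ℂ) • (T (-1) * v 0)) ∈ Lminus) ∧
    (T (k1 + k3 - 2) * v 1 ∈ Lminus ∧
      T (k1 + k3) * (v 4 - (-(k2 : ℂ)) • (T (-1) * v 1)) ∈ Lminus) ∧
    (T (k2 + k3 - 2) * v 2 ∈ Lminus ∧
      T (k2 + k3) * (v 3 - (k1 : ℂ) • (T (-1) * v 2)) ∈ Lminus) := by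
  simp only [B1, Submodule.mem_inf, Submodule.mem_comap]
  tauto

lemma mem_B_iff (k1 k2 k3 : ℤ) (v : V) : v ∈ B k1 k2 k3 ↔
    IsPairCoboundary (k1 + k2) k3 (v 0) (v 5) ∧
    IsPairCoboundary (k1 + k3) (-k2) (v 1) (v 4) ∧
    IsPairCoboundary (k2 + k3) k1 (v 2) (v 3) := by
  simp only [B, Submodule.mem_sup, isPairCoboundary_iff, B0, Submodule.mem_pi, Set.mem_univ,
    true_implies, mem_B1_iff]
  constructor
  · rintro ⟨y, hy, u, ⟨⟨h0, h5⟩, ⟨h1, h4⟩, ⟨h2, h3⟩⟩, rfl⟩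
    have hy' (i : Fin 6) : (y + u) i - u i ∈ Lplus := by simpa using hy i
    exact ⟨⟨u 0, u 5, hy' 0, hy' 5, h0, h5⟩, ⟨u 1, u 4, hy' 1, hy' 4, h1, h4⟩,
      ⟨u 2, u 3, hy' 2, hy' 3, h2, h3⟩⟩
  · rintro ⟨⟨a0, b5, ha0, hb5, h0, h5⟩, ⟨a1, b4, ha1, hb4, h1, h4⟩,
      ⟨a2, b3, ha2, hb3, h2, h3⟩⟩
    refine ⟨v - ![a0, a1, a2, b3, b4, b5], fun i => ?_, ![a0, a1, a2, b3, b4, b5],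
      ⟨⟨h0, h5⟩, ⟨h1, h4⟩, ⟨h2, h3⟩⟩, sub_add_cancel _ _⟩
    fin_cases i <;> assumption

/-- The components of `Fop` on a pair `(a₍ₜ₎, b_t)` with `m = d - k_t` and `c = σ_t k_t`. -/
def fA (m : ℤ) (a : L) : L := ((2 - m : ℤ) : ℂ) • (T 1 * a) - T 2 * D a

def fB (m : ℤ) (c : ℂ) (a b : L) : L := c • a - (m : ℂ) • (T 1 * b) - T 2 * D b

@[simp] lemma coeffL_fA (m : ℤ) (a : L) (n : ℤ) :
    coeffL (fA m a) n = ((3 - m - n : ℤ) : ℂ) * coeffL a (n - 1) := by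
  rw [fA, coeffL_sub, coeffL_smul, coeffL_T_mul, coeffL_T_mul, coeffL_D,
    show n - 2 + 1 = n - 1 by ring]
  push_cast
  ring

@[simp] lemma coeffL_fB (m : ℤ) (c : ℂ) (a b : L) (n : ℤ) :
    coeffL (fB m c a b) n = c * coeffL a n - ((m + n - 1 : ℤ) : ℂ) * coeffL b (n - 1) := by
  rw [fB, coeffL_sub, coeffL_sub, coeffL_smul, coeffL_smul, coeffL_T_mul, coeffL_T_mul,
    coeffL_D, show n - 2 + 1 = n - 1 by ring]
  push_cast
  ring

@[simp] lemma D_zero : D 0 = 0 := by simp [D]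

@[simp] lemma fA_zero (m : ℤ) : fA m 0 = 0 := by simp [fA]

@[simp] lemma fB_zero (m : ℤ) (c : ℂ) : fB m c 0 0 = 0 := by simp [fB]

def PairInvariant (m : ℤ) (c : ℂ) (a b : L) : Prop :=
  IsPairCoboundary m c (D a) (D b) ∧ IsPairCoboundary m c (fA m a) (fB m c a b)

/-- Invariance of the block formed by the pairs `(a₁₃, b₂)` and `(a₂₃, b₁)` when `k₁ = k₂ = k`
and `m = k + k₃`. -/
def CoupledInvariant (m : ℤ) (k : ℂ) (a13 a23 b1 b2 : L) : Prop :=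
  IsPairCoboundary m (-k) (D a13) (D b2) ∧ IsPairCoboundary m k (D a23 + a13) (D b1 - b2) ∧
  IsPairCoboundary m (-k) (fA m a13 + a23) (fB m (-k) a13 b2 - b1) ∧
  IsPairCoboundary m k (fA m a23) (fB m k a23 b1)

lemma pairInvariant_zero (m : ℤ) (c : ℂ) : PairInvariant m c 0 0 := by
  rw [PairInvariant, D_zero, fA_zero, fB_zero]
  exact ⟨isPairCoboundary_zero m c, isPairCoboundary_zero m c⟩

lemma coupledInvariant_zero (m : ℤ) (k : ℂ) : CoupledInvariant m k 0 0 0 0 := by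
  simp only [CoupledInvariant, D_zero, fA_zero, fB_zero, add_zero, sub_zero]
  exact ⟨isPairCoboundary_zero _ _, isPairCoboundary_zero _ _, isPairCoboundary_zero _ _,
    isPairCoboundary_zero _ _⟩

lemma E'op_eq (z : V) :
    E'op z = ![D (z 0), D (z 1), D (z 2) + z 1, D (z 3) - z 4, D (z 4), D (z 5)] := by
  ext1 i; fin_cases i <;> simp [E'op, Eop, Nop, sub_eq_add_neg]

lemma F'op_eq (k1 k2 k3 : ℤ) (z : V) :
    F'op k1 k2 k3 z = ![fA (k1 + k2) (z 0), fA (k1 + k3) (z 1) + z 2, fA (k2 + k3) (z 2),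
      fB (k2 + k3) k1 (z 2) (z 3), fB (k1 + k3) (-k2) (z 1) (z 4) - z 3,
      fB (k1 + k2) k3 (z 0) (z 5)] := by
  simp only [F'op, Fop, Mop, fA, fB, ← sub_sub (2 : ℤ)]
  ext1 i; fin_cases i <;> simp [sub_eq_add_neg]

lemma E'op_mem_B_and_F'op_mem_B_iff (k k3 : ℤ) (z : V) :
    E'op z ∈ B k k k3 ∧ F'op k k k3 z ∈ B k k k3 ↔
      PairInvariant (k + k) k3 (z 0) (z 5) ∧
        CoupledInvariant (k + k3) k (z 1) (z 2) (z 3) (z 4) := by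
  simp only [mem_B_iff, E'op_eq, F'op_eq, PairInvariant, CoupledInvariant,
    Matrix.cons_val_zero, Matrix.cons_val_one, Matrix.cons_val]
  tauto

lemma oneDimInv_of_pair {k k3 m : ℤ} {a b : L} (hm : k + k = m)
    (hw : PairInvariant m k3 a b) (hw' : ¬ IsPairCoboundary m k3 a b)
    (hspan : ∀ a' b', PairInvariant m k3 a' b' →
      ∃ c : ℂ, IsPairCoboundary m k3 (a' - c • a) (b' - c • b))
    (hcoupled : ∀ a13 a23 b1 b2, CoupledInvariant (k + k3) k a13 a23 b1 b2 →
      IsPairCoboundary (k + k3) (-k) a13 b2 ∧ IsPairCoboundary (k + k3) k a23 b1) :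
    OneDimInv k k k3 ![a, 0, 0, 0, 0, b] := by
  subst hm
  obtain ⟨hE, hF⟩ := (E'op_mem_B_and_F'op_mem_B_iff k k3 ![a, 0, 0, 0, 0, b]).2
    ⟨hw, coupledInvariant_zero _ _⟩
  refine ⟨hE, hF, fun h => hw' ((mem_B_iff _ _ _ _).1 h).1, fun z hEz hFz => ?_⟩
  obtain ⟨hz, hz'⟩ := (E'op_mem_B_and_F'op_mem_B_iff k k3 z).1 ⟨hEz, hFz⟩
  obtain ⟨c, hc⟩ := hspan _ _ hz
  obtain ⟨h14, h23⟩ := hcoupled _ _ _ _ hz'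
  exact ⟨c, (mem_B_iff _ _ _ _).2 ⟨hc, by simpa using h14, by simpa using h23⟩⟩

lemma oneDimInv_of_coupled {k k3 m : ℤ} {a13 a23 b1 b2 : L} (hm : k + k3 = m)
    (hw : CoupledInvariant m k a13 a23 b1 b2)
    (hw' : ¬ (IsPairCoboundary m (-k) a13 b2 ∧ IsPairCoboundary m k a23 b1))
    (hspan : ∀ a13' a23' b1' b2', CoupledInvariant m k a13' a23' b1' b2' →
      ∃ c : ℂ, IsPairCoboundary m (-k) (a13' - c • a13) (b2' - c • b2) ∧
        IsPairCoboundary m k (a23' - c • a23) (b1' - c • b1))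
    (hpair : ∀ a b, PairInvariant (k + k) k3 a b → IsPairCoboundary (k + k) k3 a b) :
    OneDimInv k k k3 ![0, a13, a23, b1, b2, 0] := by
  subst hm
  obtain ⟨hE, hF⟩ := (E'op_mem_B_and_F'op_mem_B_iff k k3 ![0, a13, a23, b1, b2, 0]).2
    ⟨pairInvariant_zero _ _, hw⟩
  refine ⟨hE, hF, fun h => hw' ((mem_B_iff _ _ _ _).1 h).2, fun z hEz hFz => ?_⟩
  obtain ⟨hz, hz'⟩ := (E'op_mem_B_and_F'op_mem_B_iff k k3 z).1 ⟨hEz, hFz⟩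
  obtain ⟨c, h14, h23⟩ := hspan _ _ _ _ hz'
  exact ⟨c, (mem_B_iff _ _ _ _).2 ⟨by simpa using hpair _ _ hz, h14, h23⟩⟩

lemma PairInvariant.isPairCoboundary {m : ℤ} {c : ℂ} {a b : L} (h : PairInvariant m c a b)
    (hm4 : m ≠ 4) (hm2 : m = 2 → c ≠ 0) : IsPairCoboundary m c a b := by
  obtain ⟨⟨hEa, hEb, -⟩, ⟨hFa, hFb, hF₁⟩⟩ := h
  simp only [coeffL_D, coeffL_fA, coeffL_fB, add_sub_cancel_right] at hEa hEb hFa hFb hF₁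
  have ha : ∀ n : ℤ, 3 - m ≤ n → n < 0 → coeffL a n = 0 := by
    intro n h1 h2
    rcases (show n < -1 ∨ n = -1 by omega) with hn | rfl
    · obtain ⟨j, rfl⟩ : ∃ j, n = j - 1 := ⟨n + 1, by ring⟩
      exact eq_zero_of_intCast_mul_eq_zero (by omega) (hFa j (by omega) (by omega))
    · simpa using hEa (-2) (by omega) (by omega)
  refine ⟨ha, fun n h1 h2 => ?_, fun h => ?_⟩
  · obtain ⟨j, rfl⟩ : ∃ j, n = j - 1 := ⟨n + 1, by ring⟩
    rw [sub_add_cancel]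
    rcases (show 3 - m ≤ j ∨ j = 2 - m by omega) with hj | rfl
    · have h := hEb (j - 2) (by omega) (by omega)
      rw [show j - 2 + 1 + 1 = j by ring, show j - 2 + 1 = j - 1 by ring,
        ha j hj (by omega), mul_zero, mul_zero] at h
      rw [ha j hj (by omega), mul_zero]
      exact eq_zero_of_intCast_mul_eq_zero (by omega) h
    · rcases (show m = 3 ∨ 4 ≤ m by omega) with rfl | hm
      · have h := hF₁ (Or.inl le_rfl)
        norm_num at h ⊢
        linear_combination -h
      · have h := hFb (2 - m) (by omega) (by omega)
        rw [show 3 - m - (2 - m + 1) = 0 by ring, show m + (2 - m) - 1 = 1 by ring] at h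
        push_cast at h
        linear_combination -h
  · rcases h with hm | ⟨rfl, hc⟩
    · simpa using hEb (-2) (by omega) (by omega)
    · exact absurd hc (hm2 rfl)

lemma pairInvariant_four (c : ℂ) : PairInvariant 4 c (T (-1)) ((c / 2) • T (-2)) := by
  refine ⟨⟨?_, ?_, fun _ => ?_⟩, ⟨?_, ?_, fun _ => ?_⟩⟩
  all_goals
    try intro n h1 h2; interval_cases n
    all_goals simp <;> ring

lemma not_isPairCoboundary_four (c : ℂ) : ¬ IsPairCoboundary 4 c (T (-1)) ((c / 2) • T (-2)) :=
  fun h => by simpa using h.1 (-1) (by norm_num) (by norm_num)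

lemma PairInvariant.isPairCoboundary_sub_four {c : ℂ} {a b : L} (h : PairInvariant 4 c a b) :
    IsPairCoboundary 4 c (a - coeffL a (-1) • T (-1)) (b - coeffL a (-1) • (c / 2) • T (-2)) := by
  obtain ⟨⟨-, hEb, -⟩, ⟨-, hFb, -⟩⟩ := h
  have h₃ := hEb (-3) (by norm_num) (by norm_num)
  have h₂ := hEb (-2) (by norm_num) (by norm_num)
  have h₂' := hFb (-2) (by norm_num) (by norm_num)
  norm_num at h₃ h₂ h₂'
  refine ⟨fun n h1 h2 => ?_, fun n h1 h2 => ?_, fun _ => by simpa using h₂⟩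
  · obtain rfl : n = -1 := by omega
    simp
  · interval_cases n <;> simp
    · linear_combination -h₂'
    · linear_combination h₃ / 2

lemma pairInvariant_two_zero : PairInvariant 2 0 0 (T (-1)) := by
  simp [PairInvariant, isPairCoboundary_two_iff]

lemma not_isPairCoboundary_two_zero : ¬ IsPairCoboundary 2 0 0 (T (-1)) := by
  simp [isPairCoboundary_two_iff]

lemma CoupledInvariant.coeffL_a_eq_zero {m : ℤ} {k : ℂ} {a13 a23 b1 b2 : L} (hm : 4 ≤ m)
    (hm5 : m ≠ 5) (h : CoupledInvariant m k a13 a23 b1 b2) :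
    (∀ n : ℤ, 3 - m ≤ n → n < 0 → coeffL a13 n = 0) ∧
      ∀ n : ℤ, 3 - m ≤ n → n < 0 → coeffL a23 n = 0 := by
  obtain ⟨⟨hE₁, -, -⟩, ⟨hE₂, -, -⟩, ⟨hF₁, -, -⟩, ⟨hF₂, -, -⟩⟩ := h
  simp only [coeffL_D, coeffL_add, coeffL_fA] at hE₁ hE₂ hF₁ hF₂
  have h13 : ∀ n : ℤ, 4 - m ≤ n → n < 0 → coeffL a13 n = 0 := by
    intro n h1 h2
    obtain ⟨i, rfl⟩ : ∃ i, n = i + 1 := ⟨n - 1, by ring⟩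
    exact eq_zero_of_intCast_mul_eq_zero (by omega) (hE₁ i (by omega) (by omega))
  have h23 : ∀ n : ℤ, 3 - m ≤ n → n < -1 → coeffL a23 n = 0 := by
    intro n h1 h2
    obtain ⟨i, rfl⟩ : ∃ i, n = i - 1 := ⟨n + 1, by ring⟩
    exact eq_zero_of_intCast_mul_eq_zero (by omega) (hF₂ i (by omega) (by omega))
  -- the coupling terms of `e′` and `f′` force the two remaining coefficients
  refine ⟨fun n h1 h2 => ?_, fun n h1 h2 => ?_⟩
  · rcases (show 4 - m ≤ n ∨ n = 3 - m by omega) with hn | rfl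
    · exact h13 n hn h2
    · have h := hE₂ (3 - m) le_rfl (by omega)
      rcases (show m = 4 ∨ 6 ≤ m by omega) with rfl | hm6
      · simpa using h
      · rwa [h23 _ (by omega) (by omega), mul_zero, zero_add] at h
  · rcases (show n < -1 ∨ n = -1 by omega) with hn | rfl
    · exact h23 n h1 hn
    · have h := hF₁ (-1) (by omega) (by omega)
      rcases (show m = 4 ∨ 6 ≤ m by omega) with rfl | hm6
      · simpa using h
      · rwa [h13 _ (by omega) (by omega), mul_zero, zero_add] at h

lemma CoupledInvariant.coeffL_b1_eq {m : ℤ} {k : ℂ} {a13 a23 b1 b2 : L}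
    (h : CoupledInvariant m k a13 a23 b1 b2) (hm : 4 ≤ m) (hm5 : m ≠ 5) :
    ∀ n : ℤ, 1 - m ≤ n → n < -1 → coeffL b1 n = k * coeffL a23 (n + 1) := by
  have h23 := (h.coeffL_a_eq_zero hm hm5).2
  obtain ⟨-, -, -, ⟨-, hF₂, hF₂'⟩⟩ := h
  simp only [coeffL_fA, coeffL_fB, add_sub_cancel_right] at hF₂ hF₂'
  intro n h1 h2
  rcases (show n < -2 ∨ n = -2 by omega) with hn | rfl
  · obtain ⟨i, rfl⟩ : ∃ i, n = i - 1 := ⟨n + 1, by ring⟩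
    have h := hF₂ i (by omega) (by omega)
    have h' : ((m + i - 1 : ℤ) : ℂ) * (coeffL b1 (i - 1) - k * coeffL a23 i) = 0 := by
      push_cast at h ⊢
      linear_combination -h
    rw [sub_add_cancel, ← sub_eq_zero]
    exact eq_zero_of_intCast_mul_eq_zero (by omega) h'
  · have h := hF₂' (Or.inl (by omega))
    rw [h23 (-1) (by omega) (by omega), mul_zero, zero_sub, neg_eq_zero,
      show (-1 : ℤ) - 1 = -2 by norm_num] at h
    rw [show (-2 : ℤ) + 1 = -1 by norm_num, h23 (-1) (by omega) (by omega), mul_zero]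
    exact eq_zero_of_intCast_mul_eq_zero (by omega) h

lemma CoupledInvariant.isPairCoboundary_of_four_le {m : ℤ} {k : ℂ} {a13 a23 b1 b2 : L}
    (h : CoupledInvariant m k a13 a23 b1 b2) (hm : 4 ≤ m) (hm5 : m ≠ 5) :
    IsPairCoboundary m (-k) a13 b2 ∧ IsPairCoboundary m k a23 b1 := by
  obtain ⟨h13, h23⟩ := h.coeffL_a_eq_zero hm hm5
  have hb1 := h.coeffL_b1_eq hm hm5
  obtain ⟨⟨-, hE₁, -⟩, ⟨-, -, hE₂⟩, ⟨-, hF₁, hF₁'⟩, -⟩ := h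
  simp only [coeffL_D, coeffL_sub, coeffL_add, coeffL_fA, coeffL_fB, add_sub_cancel_right]
    at hE₁ hE₂ hF₁ hF₁'
  have hb2 : ∀ n : ℤ, 1 - m ≤ n → n < -1 → coeffL b2 n = -k * coeffL a13 (n + 1) := by
    intro n h1 h2
    rcases (show 2 - m ≤ n ∨ n = 1 - m by omega) with hn | rfl
    · obtain ⟨i, rfl⟩ : ∃ i, n = i + 1 := ⟨n - 1, by ring⟩
      have h := hE₁ i (by omega) (by omega)
      rw [h13 (i + 1 + 1) (by omega) (by omega), mul_zero, mul_zero] at h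
      rw [h13 (i + 1 + 1) (by omega) (by omega), mul_zero]
      exact eq_zero_of_intCast_mul_eq_zero (by omega) h
    · have h := hF₁ (2 - m) (by omega) (by omega)
      rw [show m + (2 - m) - 1 = 1 by ring, show 3 - m - (2 - m + 1) = 0 by ring,
        hb1 (2 - m) (by omega) (by omega), show 2 - m + 1 = 3 - m by ring,
        h23 (3 - m) le_rfl (by omega), show 2 - m - 1 = 1 - m by ring] at h
      rw [show 1 - m + 1 = 2 - m by ring]
      push_cast at h
      linear_combination -h
  refine ⟨⟨h13, hb2, fun _ => ?_⟩, ⟨h23, hb1, fun _ => ?_⟩⟩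
  · simpa using hE₂ (Or.inl (by omega))
  · simpa [hb2 (-2) (by omega) (by omega), h13 (-1) (by omega) (by omega)]
      using hF₁' (Or.inl (by omega))

lemma CoupledInvariant.isPairCoboundary {m : ℤ} {k : ℂ} {a13 a23 b1 b2 : L}
    (h : CoupledInvariant m k a13 a23 b1 b2) (hm3 : m ≠ 3) (hm5 : m ≠ 5) :
    IsPairCoboundary m (-k) a13 b2 ∧ IsPairCoboundary m k a23 b1 := by
  rcases (show m ≤ 1 ∨ m = 2 ∨ 4 ≤ m by omega) with hm | rfl | hm
  · exact ⟨isPairCoboundary_of_le_one hm _ _ _, isPairCoboundary_of_le_one hm _ _ _⟩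
  · obtain ⟨-, ⟨-, -, hE₂⟩, ⟨-, -, hF₁⟩, -⟩ := h
    rw [isPairCoboundary_two_iff, isPairCoboundary_two_iff]
    refine ⟨fun hk => ?_, fun hk => ?_⟩
    · simpa using hE₂ (Or.inr ⟨rfl, neg_eq_zero.mp hk⟩)
    · simpa [hk] using hF₁ (Or.inr ⟨rfl, by rw [hk, neg_zero]⟩)
  · exact h.isPairCoboundary_of_four_le hm hm5

lemma coupledInvariant_three (k : ℂ) : CoupledInvariant 3 k 0 0 (-T (-1)) (T (-2)) := by
  refine ⟨⟨?_, ?_, fun _ => ?_⟩, ⟨?_, ?_, fun _ => ?_⟩, ⟨?_, ?_, fun _ => ?_⟩,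
    ⟨?_, ?_, fun _ => ?_⟩⟩
  all_goals
    try intro n h1 h2; interval_cases n
    all_goals simp

lemma not_isPairCoboundary_three (k : ℂ) :
    ¬ (IsPairCoboundary 3 (-k) 0 (T (-2)) ∧ IsPairCoboundary 3 k 0 (-T (-1))) :=
  fun h => by simpa using h.2.2.2 (Or.inl le_rfl)

lemma CoupledInvariant.exists_isPairCoboundary_sub_three {k : ℂ} {a13 a23 b1 b2 : L}
    (h : CoupledInvariant 3 k a13 a23 b1 b2) :
    ∃ c : ℂ, IsPairCoboundary 3 (-k) (a13 - c • 0) (b2 - c • T (-2)) ∧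
      IsPairCoboundary 3 k (a23 - c • 0) (b1 - c • -T (-1)) := by
  obtain ⟨-, ⟨-, -, hE₂⟩, ⟨-, -, hF₁⟩, ⟨-, -, hF₂⟩⟩ := h
  have h₁ := hE₂ (Or.inl le_rfl)
  have h₂ := hF₁ (Or.inl le_rfl)
  have h₃ := hF₂ (Or.inl le_rfl)
  norm_num at h₁ h₂ h₃
  refine ⟨-coeffL b1 (-1), ⟨fun n _ _ => by omega, fun n h1 h2 => ?_, fun _ => ?_⟩,
    ⟨fun n _ _ => by omega, fun n h1 h2 => ?_, fun _ => ?_⟩⟩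
  all_goals try obtain rfl : n = -2 := by omega
  all_goals simp
  · linear_combination -h₂
  · exact h₁
  · linear_combination -h₃

lemma coupledInvariant_five (k : ℂ) :
    CoupledInvariant 5 k (T (-2)) (T (-1)) ((k / 3) • T (-2)) (-((2 * k / 3) • T (-3))) := by
  refine ⟨⟨?_, ?_, fun _ => ?_⟩, ⟨?_, ?_, fun _ => ?_⟩, ⟨?_, ?_, fun _ => ?_⟩,
    ⟨?_, ?_, fun _ => ?_⟩⟩
  all_goals
    try intro n h1 h2; interval_cases n
    all_goals simp <;> ring

lemma not_isPairCoboundary_five (k : ℂ) :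
    ¬ (IsPairCoboundary 5 (-k) (T (-2)) (-((2 * k / 3) • T (-3))) ∧
      IsPairCoboundary 5 k (T (-1)) ((k / 3) • T (-2))) :=
  fun h => by simpa using h.1.1 (-2) (by norm_num) (by norm_num)

lemma CoupledInvariant.exists_isPairCoboundary_sub_five {k : ℂ} {a13 a23 b1 b2 : L}
    (h : CoupledInvariant 5 k a13 a23 b1 b2) :
    ∃ c : ℂ, IsPairCoboundary 5 (-k) (a13 - c • T (-2)) (b2 - c • -((2 * k / 3) • T (-3))) ∧
      IsPairCoboundary 5 k (a23 - c • T (-1)) (b1 - c • (k / 3) • T (-2)) := by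
  obtain ⟨⟨hE₁a, hE₁b, -⟩, ⟨hE₂a, hE₂b, hE₂⟩, ⟨-, hF₁b, -⟩, ⟨hF₂a, hF₂b, hF₂⟩⟩ := h
  have f1 := hE₁a (-2) (by norm_num) (by norm_num)
  have f2 := hF₂a (-1) (by norm_num) (by norm_num)
  have f3 := hE₂a (-2) (by norm_num) (by norm_num)
  have f4 := hE₂ (Or.inl (by norm_num))
  have f5 := hE₁b (-3) (by norm_num) (by norm_num)
  have f6 := hE₁b (-4) (by norm_num) (by norm_num)
  have f7 := hE₂b (-2) (by norm_num) (by norm_num)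
  have f8 := hF₂ (Or.inl (by norm_num))
  have f9 := hF₂b (-2) (by norm_num) (by norm_num)
  have f10 := hF₂b (-3) (by norm_num) (by norm_num)
  have f11 := hF₁b (-3) (by norm_num) (by norm_num)
  norm_num at f1 f2 f3 f4 f5 f6 f7 f8 f9 f10 f11
  refine ⟨coeffL a23 (-1), ⟨fun n h1 h2 => ?_, fun n h1 h2 => ?_, fun _ => ?_⟩,
    ⟨fun n h1 h2 => ?_, fun n h1 h2 => ?_, fun _ => ?_⟩⟩
  all_goals try interval_cases n
  all_goals simp
  · linear_combination f3
  · exact f1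
  · linear_combination -f11 + f9 / 2
  · linear_combination -f6 / 3 + k / 3 * f3
  · linear_combination -f5 / 2 + k / 2 * f1
  · exact f4
  · exact f2
  · linear_combination -f10
  · linear_combination -f9 / 2
  · linear_combination -f8 / 3
  · linear_combination -f7 + f5 / 2 - k / 2 * f1

/-- In each of the four cases `(2,2,k₃)` with `k₃ ∉ {1,3}`, `(k,k,3−k)` with
`k ≠ 2`, `(k,k,5−k)` with `k ≠ 2`, and `(1,1,0)`, the 𝔰′-invariant part of
`H¹(ℂℙ¹, T₂)` is one-dimensional, spanned by the class of the given `w`. -/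
theorem stmt_9 :
    (∀ k3 : ℤ, k3 ≠ 1 → k3 ≠ 3 →
      OneDimInv 2 2 k3 ![T (-1), 0, 0, 0, 0, ((k3 : ℂ) / 2) • T (-2)]) ∧
    (∀ k : ℤ, k ≠ 2 →
      OneDimInv k k (3 - k) ![0, 0, 0, -T (-1), T (-2), 0]) ∧
    (∀ k : ℤ, k ≠ 2 →
      OneDimInv k k (5 - k)
        ![0, T (-2), T (-1), ((k : ℂ) / 3) • T (-2), -((2 * (k : ℂ) / 3) • T (-3)), 0]) ∧
    OneDimInv 1 1 0 ![0, 0, 0, 0, 0, T (-1)] := by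
  refine ⟨fun k3 h1 h3 => ?_, fun k hk => ?_, fun k hk => ?_, ?_⟩
  · exact oneDimInv_of_pair (m := 4) rfl (pairInvariant_four _) (not_isPairCoboundary_four _)
      (fun _ _ h => ⟨_, h.isPairCoboundary_sub_four⟩)
      (fun _ _ _ _ h => h.isPairCoboundary (by omega) (by omega))
  · refine oneDimInv_of_coupled (m := 3) (by ring) (coupledInvariant_three _)
      (not_isPairCoboundary_three _) (fun _ _ _ _ h => h.exists_isPairCoboundary_sub_three)
      fun _ _ h => h.isPairCoboundary (by omega) fun h2 => ?_
    rw [show k = 1 by omega]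
    norm_num
  · refine oneDimInv_of_coupled (m := 5) (by ring) (coupledInvariant_five _)
      (not_isPairCoboundary_five _) (fun _ _ _ _ h => h.exists_isPairCoboundary_sub_five)
      fun _ _ h => h.isPairCoboundary (by omega) fun h2 => ?_
    rw [show k = 1 by omega]
    norm_num
  · exact oneDimInv_of_pair (m := 2) rfl (by simpa using pairInvariant_two_zero)
      (by simpa using not_isPairCoboundary_two_zero)
      (fun _ b _ => ⟨coeffL b (-1), by simp [isPairCoboundary_two_iff]⟩)
      (fun _ _ _ _ _ => ⟨isPairCoboundary_of_le_one (by norm_num) _ _ _,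
        isPairCoboundary_of_le_one (by norm_num) _ _ _⟩)
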